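/- Suppose each φ_i is convex, differentiable, and L_i-smooth, F(w) = (1/n)∑φ_i(w) + (λ/2)‖w‖² with minimizer w*, and α*_i = -∇φ_i(w*). With q_i = (L_i + L̄)/(2nL̄), then ∑_i (1/q_i)·‖∇φ_i(w) - ∇φ_i(w*)‖² ≤ 4n²L̄·(F(w) - F(w*)) for every w. -/

import Mathlib

/-!
Write `D_i = φ_i(w) - φ_i(w*) - ⟪∇φ_i(w*), w - w*⟫` for the Bregman divergences at `w*`.
Cocoercivity of a convex `L_i`-smooth function gives `‖∇φ_i(w) - ∇φ_i(w*)‖² ≤ 2 L_i D_i`, and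
`2 L_i / q_i = 4 n L̄ · L_i / (L_i + L̄) ≤ 4 n L̄`. Optimality of `w*` means
`∑ ∇φ_i(w*) = -λ n w*`, whence `∑ D_i = n (F(w) - F(w*)) - n λ ‖w - w*‖² / 2 ≤ n (F(w) - F(w*))`.
-/

open Set
open scoped Gradient RealInnerProductSpace NNReal

variable {E : Type*} [NormedAddCommGroup E] [InnerProductSpace ℝ E] [CompleteSpace E]

noncomputable def bregman (f : E → ℝ) (x y : E) : ℝ := f x - f y - ⟪∇ f y, x - y⟫

lemma bregman_three_point (f : E → ℝ) (x y z : E) :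
    bregman f x y = bregman f z y - bregman f z x - ⟪∇ f x - ∇ f y, z - x⟫ := by
  simp only [bregman, inner_sub_left, inner_sub_right]
  ring

lemma hasDerivAt_comp_add_smul {f : E → ℝ} {x v : E} {t : ℝ}
    (hf : DifferentiableAt ℝ f (x + t • v)) :
    HasDerivAt (fun s : ℝ => f (x + s • v)) ⟪∇ f (x + t • v), v⟫ t := by
  have hline : HasDerivAt (fun s : ℝ => x + s • v) v t := by
    simpa using ((hasDerivAt_id t).smul_const v).const_add x
  simpa [Function.comp_def, ← inner_gradient_left] using
    hf.hasFDerivAt.comp_hasDerivAt t hline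

lemma ConvexOn.bregman_nonneg {f : E → ℝ} {y : E} (hconv : ConvexOn ℝ univ f)
    (hf : DifferentiableAt ℝ f y) (x : E) : 0 ≤ bregman f x y := by
  have hline : ConvexOn ℝ univ (fun s : ℝ => f (y + s • (x - y))) := by
    simpa [Function.comp_def, AffineMap.lineMap_apply, add_comm] using
      hconv.comp_affineMap (AffineMap.lineMap y x)
  have hslope := hline.le_slope_of_hasDerivAt (mem_univ 0) (mem_univ 1) one_pos
    (hasDerivAt_comp_add_smul (by simpa using hf))
  simp only [zero_smul, add_zero, one_smul, add_sub_cancel, slope_def_field, sub_zero,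
    div_one] at hslope
  rw [bregman]
  linarith

lemma LipschitzWith.bregman_le {f : E → ℝ} {K : ℝ≥0} (hf : Differentiable ℝ f)
    (hK : LipschitzWith K (∇ f)) (x y : E) : bregman f y x ≤ K / 2 * ‖y - x‖ ^ 2 := by
  set v := y - x
  let g : ℝ → ℝ := fun t => f (x + t • v) - t * ⟪∇ f x, v⟫ - K / 2 * t ^ 2 * ‖v‖ ^ 2
  have hg : ∀ t, HasDerivAt g (⟪∇ f (x + t • v) - ∇ f x, v⟫ - K * t * ‖v‖ ^ 2) t := by
    intro t
    refine (((hasDerivAt_comp_add_smul (x := x) (v := v) (hf _)).sub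
      ((hasDerivAt_id t).mul_const ⟪∇ f x, v⟫)).sub
      (((hasDerivAt_pow 2 t).const_mul (K / 2 : ℝ)).mul_const (‖v‖ ^ 2))).congr_deriv ?_
    rw [inner_sub_left]
    ring
  have hg' : ∀ t ∈ interior (Icc (0 : ℝ) 1),
      ⟪∇ f (x + t • v) - ∇ f x, v⟫ - K * t * ‖v‖ ^ 2 ≤ 0 := by
    intro t ht
    rw [interior_Icc] at ht
    have hlip : ‖∇ f (x + t • v) - ∇ f x‖ ≤ K * (t * ‖v‖) := by
      simpa [dist_eq_norm, norm_smul, abs_of_pos ht.1] using hK.dist_le_mul (x + t • v) x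
    nlinarith [real_inner_le_norm (∇ f (x + t • v) - ∇ f x) v, norm_nonneg v]
  have hanti : AntitoneOn g (Icc 0 1) :=
    antitoneOn_of_hasDerivWithinAt_nonpos (convex_Icc 0 1)
      (fun t _ => (hg t).continuousAt.continuousWithinAt)
      (fun t _ => (hg t).hasDerivWithinAt) hg'
  have := hanti (left_mem_Icc.2 zero_le_one) (right_mem_Icc.2 zero_le_one) zero_le_one
  simp only [g, zero_smul, add_zero, zero_mul, sub_zero, one_smul, one_mul, one_pow,
    ne_eq, OfNat.ofNat_ne_zero, not_false_eq_true, zero_pow, mul_zero, v, add_sub_cancel] at this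
  rw [bregman]
  linarith

lemma ConvexOn.sq_norm_gradient_sub_le_bregman {f : E → ℝ} {K : ℝ≥0} (hconv : ConvexOn ℝ univ f)
    (hf : Differentiable ℝ f) (hK : LipschitzWith K (∇ f)) (x y : E) :
    ‖∇ f x - ∇ f y‖ ^ 2 ≤ 2 * K * bregman f x y := by
  obtain rfl | hK0 := eq_zero_or_pos K
  · simpa [sub_eq_zero] using hK.dist_le_mul x y
  -- compare the divergences at the gradient step `z` from `x`
  set g := ∇ f x - ∇ f y
  set z := x - (K : ℝ)⁻¹ • g
  have hK0' : (0 : ℝ) < K := hK0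
  have hzx : ‖z - x‖ = ‖g‖ / K := by
    rw [sub_sub_cancel_left, norm_neg, norm_smul, norm_inv, NNReal.norm_eq, inv_mul_eq_div]
  have hinner : K * ⟪g, z - x⟫ = -‖g‖ ^ 2 := by
    rw [sub_sub_cancel_left, inner_neg_right, real_inner_smul_right, real_inner_self_eq_norm_sq,
      mul_neg, mul_inv_cancel_left₀ hK0'.ne']
  have h₁ := hconv.bregman_nonneg (hf y) z
  have h₂ := hK.bregman_le hf x z
  rw [hzx, div_pow] at h₂
  field_simp at h₂
  rw [bregman_three_point f x y z]
  nlinarith [mul_nonneg hK0'.le h₁]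

lemma ConvexOn.div_add_mul_sq_norm_gradient_sub_le {f : E → ℝ} {K : ℝ≥0} {a b : ℝ}
    (hconv : ConvexOn ℝ univ f) (hf : Differentiable ℝ f) (hK : LipschitzWith K (∇ f))
    (ha : 0 < a) (hb : 0 ≤ b) (x y : E) :
    b / (K + a) * ‖∇ f x - ∇ f y‖ ^ 2 ≤ 2 * b * bregman f x y := by
  have hKa : 0 < (K : ℝ) + a := by positivity
  have hcoco := hconv.sq_norm_gradient_sub_le_bregman hf hK x y
  have hB := hconv.bregman_nonneg (hf y) x
  calc b / (K + a) * ‖∇ f x - ∇ f y‖ ^ 2 ≤ b / (K + a) * (2 * K * bregman f x y) := by gcongr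
    _ ≤ 2 * b * bregman f x y := by
      rw [div_mul_eq_mul_div, div_le_iff₀ hKa]
      nlinarith [mul_nonneg (mul_nonneg hb ha.le) hB]

lemma mul_sum_bregman_le_sub_of_forall_le {ι : Type*} (s : Finset ι) {φ : ι → E → ℝ} {c lam : ℝ}
    (hlam : 0 ≤ lam) {x : E} (hφ : ∀ i ∈ s, DifferentiableAt ℝ (φ i) x)
    (hmin : ∀ v, c * ∑ i ∈ s, φ i x + lam / 2 * ‖x‖ ^ 2 ≤ c * ∑ i ∈ s, φ i v + lam / 2 * ‖v‖ ^ 2)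
    (w : E) :
    c * ∑ i ∈ s, bregman (φ i) w x ≤
      c * ∑ i ∈ s, φ i w + lam / 2 * ‖w‖ ^ 2 - (c * ∑ i ∈ s, φ i x + lam / 2 * ‖x‖ ^ 2) := by
  have hderiv : HasFDerivAt (fun v => c * ∑ i ∈ s, φ i v + lam / 2 * ‖v‖ ^ 2)
      (c • ∑ i ∈ s, fderiv ℝ (φ i) x + (lam / 2) • (2 • innerSL ℝ x)) x :=
    ((HasFDerivAt.fun_sum fun i hi => (hφ i hi).hasFDerivAt).const_mul c).add
      ((hasStrictFDerivAt_norm_sq x).hasFDerivAt.const_mul (lam / 2))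
  have hstat := congrArg (· (w - x)) (IsLocalMin.hasFDerivAt_eq_zero
    (Filter.Eventually.of_forall hmin) hderiv)
  simp only [add_apply, smul_apply, sum_apply, ← inner_gradient_left, smul_eq_mul,
    innerSL_apply_apply, nsmul_eq_mul, Nat.cast_ofNat, zero_apply] at hstat
  -- `hstat` says `c ∑ ∇φᵢ x = -lam • x`, so the two sides differ by `lam / 2 * ‖w - x‖ ^ 2`
  have hnorm : ‖w‖ ^ 2 = ‖x‖ ^ 2 + 2 * ⟪x, w - x⟫ + ‖w - x‖ ^ 2 := by
    rw [← norm_add_sq_real, add_sub_cancel]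
  simp only [bregman, Finset.sum_sub_distrib, mul_sub]
  nlinarith [sq_nonneg ‖w - x‖]

theorem grad_diff_sum_bound_convex_general
    (d n : ℕ) (lam : ℝ) (hlam : 0 < lam)
    (φ : Fin n → EuclideanSpace ℝ (Fin d) → ℝ)
    (L : Fin n → ℝ) (hL : ∀ i, 0 < L i)
    (hconv : ∀ i, ConvexOn ℝ Set.univ (φ i))
    (hdiff : ∀ i, Differentiable ℝ (φ i))
    (hlip : ∀ i, LipschitzWith (L i).toNNReal (gradient (φ i)))
    (Lbar : ℝ) (hLbar : Lbar = (1 / (n : ℝ)) * ∑ i, L i)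
    (F : EuclideanSpace ℝ (Fin d) → ℝ)
    (hF : ∀ v, F v = (1 / (n : ℝ)) * ∑ i, φ i v + lam / 2 * ‖v‖ ^ 2)
    (wstar : EuclideanSpace ℝ (Fin d)) (hmin : ∀ v, F wstar ≤ F v)
    (q : Fin n → ℝ) (hq : ∀ i, q i = (L i + Lbar) / (2 * n * Lbar)) :
    ∀ w : EuclideanSpace ℝ (Fin d),
      ∑ i, (1 / q i) * ‖gradient (φ i) w - gradient (φ i) wstar‖ ^ 2 ≤
        4 * n ^ 2 * Lbar * (F w - F wstar) := by
  intro w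
  obtain rfl | hn := n.eq_zero_or_pos
  · simp
  have hLbar_pos : 0 < Lbar := by
    rw [hLbar]
    have : Nonempty (Fin n) := ⟨⟨0, hn⟩⟩
    exact mul_pos (by positivity) (Finset.sum_pos (fun i _ => hL i) Finset.univ_nonempty)
  have hgap : ∑ i, bregman (φ i) w wstar ≤ n * (F w - F wstar) := by
    have := mul_sum_bregman_le_sub_of_forall_le Finset.univ hlam.le (fun i _ => hdiff i wstar)
      (fun v => by simpa only [hF] using hmin v) w
    rw [hF, hF]
    field_simp at this ⊢
    linarith
  have hterm : ∀ i, (1 / q i) * ‖gradient (φ i) w - gradient (φ i) wstar‖ ^ 2 ≤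
      2 * (2 * n * Lbar) * bregman (φ i) w wstar := by
    intro i
    have hLi : ((L i).toNNReal : ℝ) = L i := Real.coe_toNNReal _ (hL i).le
    rw [hq i, one_div_div, ← hLi]
    exact (hconv i).div_add_mul_sq_norm_gradient_sub_le (hdiff i) (hlip i) hLbar_pos
      (by positivity) w wstar
  calc ∑ i, (1 / q i) * ‖gradient (φ i) w - gradient (φ i) wstar‖ ^ 2
      ≤ ∑ i, 2 * (2 * n * Lbar) * bregman (φ i) w wstar := Finset.sum_le_sum fun i _ => hterm i
    _ = 2 * (2 * n * Lbar) * ∑ i, bregman (φ i) w wstar := by rw [Finset.mul_sum]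
    _ ≤ 2 * (2 * n * Lbar) * (n * (F w - F wstar)) := by gcongr
    _ = 4 * n ^ 2 * Lbar * (F w - F wstar) := by ring

theorem grad_diff_sum_bound_convex
    (d n : ℕ) (hn : 1 ≤ n) (lam : ℝ) (hlam : 0 < lam)
    (φ : Fin n → EuclideanSpace ℝ (Fin d) → ℝ)
    (L : Fin n → ℝ) (hL : ∀ i, 0 < L i)
    (hconv : ∀ i, ConvexOn ℝ Set.univ (φ i))
    (hdiff : ∀ i, Differentiable ℝ (φ i))
    (hlip : ∀ i, LipschitzWith (L i).toNNReal (gradient (φ i)))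
    (Lbar : ℝ) (hLbar : Lbar = (1 / (n : ℝ)) * ∑ i, L i)
    (F : EuclideanSpace ℝ (Fin d) → ℝ)
    (hF : ∀ v, F v = (1 / (n : ℝ)) * ∑ i, φ i v + lam / 2 * ‖v‖ ^ 2)
    (wstar : EuclideanSpace ℝ (Fin d)) (hmin : ∀ v, F wstar ≤ F v)
    (q : Fin n → ℝ) (hq : ∀ i, q i = (L i + Lbar) / (2 * n * Lbar)) :
    ∀ w : EuclideanSpace ℝ (Fin d),
      ∑ i, (1 / q i) * ‖gradient (φ i) w - gradient (φ i) wstar‖ ^ 2 ≤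
        4 * n ^ 2 * Lbar * (F w - F wstar) :=
  grad_diff_sum_bound_convex_general d n lam hlam φ L hL hconv hdiff hlip Lbar hLbar F hF wstar hmin
    q hq
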